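/- Let b ≥ 2 be an integer and f ∈ C¹(S¹) with ∫ f dx = 0. The series g := ∑_{i=0}^{∞} (T̂*_b)^i f converges in C¹-norm and satisfies g − T̂*_b g = f. Moreover, if g is (almost everywhere equal to a function) measurable with respect to T_b^{-1}(Borel), then u := T̂*_b g satisfies u ∘ T_b − u = f Lebesgue-almost everywhere; in particular f is then a T_b-coboundary with continuously differentiable transfer function u. -/

import Mathlib

/-!
Setting: the circle `S¹ = ℝ/ℤ` with Lebesgue (Haar) probability measure, realized as
`1`-periodic functions on `ℝ` together with Lebesgue measure restricted to `(0, 1]`.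
For an integer `b ≥ 2`, the map `T_b x = bx (mod 1)` lifts to `x ↦ b * x` on `ℝ`, and its
Perron–Frobenius operator (the `L²`-adjoint of the Koopman operator `g ↦ g ∘ T_b`) is
`(T̂*_b g)(x) = (1/b) ∑_{j<b} g((x+j)/b)`.
-/

open MeasureTheory ProbabilityTheory Filter Function
open scoped ENNReal Topology

/-- The Lebesgue (Haar) probability measure of the circle, realized on `(0, 1] ⊆ ℝ`. -/
noncomputable def circleMeasure : Measure ℝ := volume.restrict (Set.Ioc 0 1)

/-- The Perron–Frobenius operator of `T_b x = bx (mod 1)`, acting on (`1`-periodic)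
functions on `ℝ`: `(T̂*_b g)(x) = (1/b) ∑_{j<b} g((x+j)/b)`. -/
noncomputable def PFc (b : ℕ) (g : ℝ → ℝ) : ℝ → ℝ :=
  fun x => (1 / (b : ℝ)) * ∑ j ∈ Finset.range b, g ((x + j) / b)

/-- `T̂*_{b_1} ⋯ T̂*_{b_k} g` for a finite sequence `[b_1, …, b_k]`. -/
noncomputable def PFcList (l : List ℕ) (g : ℝ → ℝ) : ℝ → ℝ := l.foldr PFc g

/-- `PFcSeg a i j = T̂*_{[i..j]} = T̂*_{a_j} ⋯ T̂*_{a_i}` for `i ≤ j`, the identity otherwise. -/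
noncomputable def PFcSeg (a : ℕ → ℕ) (i : ℕ) : ℕ → (ℝ → ℝ) → (ℝ → ℝ)
  | 0 => id
  | j + 1 => if i ≤ j + 1 then fun g => PFc (a (j + 1)) (PFcSeg a i j g) else id

/-- `u_k = ∑_{i=1}^k T̂*_{[i+1..k]} f`. -/
noncomputable def uc (a : ℕ → ℕ) (f : ℝ → ℝ) (k : ℕ) : ℝ → ℝ :=
  fun x => ∑ i ∈ Finset.Icc 1 k, PFcSeg a (i + 1) k f x

/-- `T_{[k]} = T_{a_k} ∘ ⋯ ∘ T_{a_1}` is multiplication (mod 1) by `∏_{i=1}^k a_i`. -/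
def prodA (a : ℕ → ℕ) (k : ℕ) : ℕ := ∏ i ∈ Finset.Icc 1 k, a i

/-- The Birkhoff-like sums `S_n = ∑_{k=1}^n f ∘ T_{[k]}`, for a `1`-periodic `f`. -/
noncomputable def Sc (a : ℕ → ℕ) (f : ℝ → ℝ) (n : ℕ) : ℝ → ℝ :=
  fun x => ∑ k ∈ Finset.Icc 1 n, f ((prodA a k : ℝ) * x)

/-- The `C¹`-norm `‖g‖ = sup|g| + sup|g'|`. -/
noncomputable def Cnorm (g : ℝ → ℝ) : ℝ := (⨆ x : ℝ, |g x|) + ⨆ x : ℝ, |deriv g x|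

/-- The pullback σ-algebra `T_b^{-1}(Borel)` on the circle, realized on `ℝ` as the σ-algebra
generated by the lift `x ↦ fract (b * x)` of `T_b`. -/
noncomputable def circleSigma (b : ℕ) : MeasurableSpace ℝ :=
  MeasurableSpace.comap (fun x => Int.fract ((b : ℝ) * x)) Real.measurableSpace

/-- `cos²χ_k = ‖E[u_k | T_{a_{k+1}}^{-1}(Borel)]‖²_{L²} / ‖u_k‖²_{L²}` (`= 0` when `u_k = 0`,
by the convention `c / 0 = 0`). -/
noncomputable def cos2c (a : ℕ → ℕ) (f : ℝ → ℝ) (k : ℕ) : ℝ :=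
  (∫ x, ((circleMeasure[uc a f k|circleSigma (a (k + 1))]) x) ^ 2 ∂circleMeasure) /
    ∫ x, (uc a f k x) ^ 2 ∂circleMeasure

/-- `g = ∑_{i=0}^∞ (T̂*_b)^i f`, defined pointwise. -/
noncomputable def PFgeom (b : ℕ) (f : ℝ → ℝ) : ℝ → ℝ :=
  fun x => ∑' i : ℕ, (PFc b)^[i] f x

/-!
`T̂*_b` preserves periodicity and the mean and divides derivatives by `b`, and a `1`-periodic
mean-zero function is bounded by the sup of its derivative. Hence `(T̂*_b)^i f` and its
derivative are `O(b^{-i})`, so the series converges in `C¹`, and `g − T̂*_b g = f` telescopes.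
Measurability with respect to `T_b^{-1}(Borel)` makes `g` invariant under `x ↦ x + 1/b` almost
everywhere, so `(T̂*_b g)(b x) = g x` and `u ∘ T_b − u = g − (g − f) = f`.
-/

open Finset

theorem Function.Periodic.deriv {g : ℝ → ℝ} {c : ℝ} (hg : Periodic g c) :
    Periodic (_root_.deriv g) c := by
  intro x
  rw [← deriv_comp_add_const, show (fun y => g (y + c)) = g from funext hg]

theorem Function.Periodic.abs_le_of_intervalIntegral_eq_zero {g : ℝ → ℝ} {K : ℝ}
    (hg : Periodic g 1) (hd : Differentiable ℝ g) (hK : ∀ x, |_root_.deriv g x| ≤ K)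
    (hmean : ∫ x in (0 : ℝ)..1, g x = 0) (x : ℝ) : |g x| ≤ K := by
  obtain ⟨y, ⟨hy0, hy1⟩, hxy⟩ := hg.exists_mem_Ico₀ one_pos x
  have hK0 : 0 ≤ K := (abs_nonneg _).trans (hK 0)
  have hdist : ∀ t ∈ Set.uIoc (0 : ℝ) 1, ‖g y - g t‖ ≤ K := by
    intro t ht
    rw [Set.uIoc_of_le zero_le_one] at ht
    calc ‖g y - g t‖ ≤ K * ‖y - t‖ :=
          convex_univ.norm_image_sub_le_of_norm_deriv_le (fun z _ => hd z) (fun z _ => hK z)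
            trivial trivial
      _ ≤ K * 1 := by
          gcongr
          rw [Real.norm_eq_abs, abs_le]
          constructor <;> linarith [ht.1, ht.2]
      _ = K := mul_one K
  have hy : g y = ∫ t in (0 : ℝ)..1, (g y - g t) := by
    rw [intervalIntegral.integral_sub intervalIntegrable_const
      (hd.continuous.intervalIntegrable _ _), hmean]
    simp
  rw [hxy, hy]
  simpa using intervalIntegral.norm_integral_le_of_norm_le_const hdist

section PerronFrobenius

variable {b : ℕ} {g : ℝ → ℝ}

theorem periodic_PFc (hg : Periodic g 1) : Periodic (PFc b g) 1 := by
  rcases Nat.eq_zero_or_pos b with rfl | hb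
  · simp [PFc, Periodic]
  intro x
  set G : ℕ → ℝ := fun j => g ((x + j) / b)
  have hGb : G b = G 0 := by
    simp only [G, Nat.cast_zero, add_zero]
    rw [add_div, div_self (by positivity)]
    exact hg _
  have hshift : ∑ j ∈ range b, g ((x + 1 + j) / b) = ∑ j ∈ range b, G (j + 1) :=
    sum_congr rfl fun j _ => by simp only [G]; push_cast; ring_nf
  simp only [PFc]
  rw [hshift]
  have hrot := sum_range_succ' G b
  rw [sum_range_succ, hGb] at hrot
  congr 1
  linarith

theorem continuous_PFc (hg : Continuous g) : Continuous (PFc b g) := by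
  unfold PFc
  fun_prop

theorem contDiff_PFc (hg : ContDiff ℝ 1 g) : ContDiff ℝ 1 (PFc b g) :=
  contDiff_const.mul <| ContDiff.sum fun _ _ =>
    hg.comp <| (contDiff_id.add contDiff_const).div_const _

theorem hasDerivAt_PFc (hg : Differentiable ℝ g) (x : ℝ) :
    HasDerivAt (PFc b g) (PFc b (deriv g) x / b) x := by
  have hterm : ∀ j ∈ range b,
      HasDerivAt (fun y : ℝ => g ((y + j) / b)) (deriv g ((x + j) / b) * (1 / b)) x :=
    fun j _ => (hg _).hasDerivAt.comp x <| by
      simpa using ((hasDerivAt_id x).add_const (j : ℝ)).div_const (b : ℝ)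
  refine ((HasDerivAt.fun_sum hterm).const_mul (1 / (b : ℝ))).congr_deriv ?_
  simp only [PFc, ← sum_mul]
  ring

theorem abs_PFc_le {K : ℝ} (hK : ∀ x, |g x| ≤ K) (x : ℝ) : |PFc b g x| ≤ K := by
  rcases Nat.eq_zero_or_pos b with rfl | hb
  · simpa [PFc] using (abs_nonneg _).trans (hK 0)
  have hsum : |∑ j ∈ range b, g ((x + j) / b)| ≤ b * K := by
    simpa using (abs_sum_le_sum_abs (fun j : ℕ => g ((x + j) / b)) (range b)).trans
      (sum_le_card_nsmul _ _ K fun j _ => hK _)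
  rw [PFc, abs_mul, abs_of_pos (by positivity)]
  calc 1 / (b : ℝ) * |∑ j ∈ range b, g ((x + j) / b)| ≤ 1 / b * (b * K) := by gcongr
    _ = K := by field_simp

theorem abs_deriv_PFc_le {K : ℝ} (hg : Differentiable ℝ g) (hK : ∀ x, |deriv g x| ≤ K)
    (x : ℝ) : |deriv (PFc b g) x| ≤ K / b := by
  rw [(hasDerivAt_PFc hg x).deriv, abs_div, Nat.abs_cast]
  gcongr
  exact abs_PFc_le hK x

theorem intervalIntegral_PFc (hb : b ≠ 0) (hg : Continuous g) :
    ∫ x in (0 : ℝ)..1, PFc b g x = ∫ x in (0 : ℝ)..1, g x := by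
  have hb0 : (b : ℝ) ≠ 0 := Nat.cast_ne_zero.mpr hb
  have hbranch : ∀ j : ℕ, ∫ x in (0 : ℝ)..1, g ((x + j) / b)
      = b * ∫ x in ((j : ℝ) / b)..((j + 1 : ℕ) / b), g x := by
    intro j
    rw [intervalIntegral.integral_comp_add_right (fun y => g (y / b)),
      intervalIntegral.integral_comp_div _ hb0, smul_eq_mul]
    push_cast
    ring_nf
  have hadj := intervalIntegral.sum_integral_adjacent_intervals (a := fun j : ℕ => (j : ℝ) / b)
    (n := b) (f := g) (μ := MeasureTheory.volume) fun k _ => hg.intervalIntegrable _ _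
  simp only [Nat.cast_zero, zero_div, div_self hb0] at hadj
  simp only [PFc]
  rw [intervalIntegral.integral_const_mul, intervalIntegral.integral_finsetSum fun j _ =>
    (by fun_prop : Continuous _).intervalIntegrable _ _]
  simp only [hbranch, ← mul_sum, hadj]
  field_simp

theorem PFc_tsum {F : ℕ → ℝ → ℝ} (hF : ∀ x, Summable fun i => F i x) (x : ℝ) :
    PFc b (fun y => ∑' i, F i y) x = ∑' i, PFc b (F i) x := by
  simp only [PFc]
  rw [← Summable.tsum_finsetSum fun j _ => hF _, ← tsum_mul_left]

theorem PFc_apply_mul_self (hb : b ≠ 0) {x : ℝ} (hg : ∀ j < b, g (x + j / b) = g x) :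
    PFc b g (b * x) = g x := by
  have hb0 : (b : ℝ) ≠ 0 := Nat.cast_ne_zero.mpr hb
  have hterm : ∀ j ∈ range b, g ((b * x + j) / b) = g x := fun j hj => by
    rw [add_div, mul_div_cancel_left₀ _ hb0]
    exact hg j (mem_range.mp hj)
  rw [PFc, sum_congr rfl hterm, sum_const, card_range, nsmul_eq_mul]
  field_simp

end PerronFrobenius

section Iterate

variable {b : ℕ} {f : ℝ → ℝ}

theorem periodic_PFc_iterate (hf : Periodic f 1) (i : ℕ) : Periodic ((PFc b)^[i] f) 1 :=
  Iterate.rec (fun g => Periodic g 1) hf (fun _ => periodic_PFc) i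

theorem contDiff_PFc_iterate (hf : ContDiff ℝ 1 f) (i : ℕ) : ContDiff ℝ 1 ((PFc b)^[i] f) :=
  Iterate.rec (fun g => ContDiff ℝ 1 g) hf (fun _ => contDiff_PFc) i

theorem intervalIntegral_PFc_iterate (hb : b ≠ 0) (hf : Continuous f) (i : ℕ) :
    ∫ x in (0 : ℝ)..1, (PFc b)^[i] f x = ∫ x in (0 : ℝ)..1, f x := by
  have hcont (i : ℕ) : Continuous ((PFc b)^[i] f) :=
    Iterate.rec Continuous hf (fun _ => continuous_PFc) i
  induction i with
  | zero => rfl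
  | succ i ih => rw [iterate_succ_apply', intervalIntegral_PFc hb (hcont i), ih]

theorem abs_deriv_PFc_iterate_le {M : ℝ} (hf : ContDiff ℝ 1 f) (hM : ∀ x, |deriv f x| ≤ M)
    (i : ℕ) (x : ℝ) : |deriv ((PFc b)^[i] f) x| ≤ M / b ^ i := by
  induction i generalizing x with
  | zero => simpa using hM x
  | succ i ih =>
    rw [iterate_succ_apply', pow_succ, ← div_div]
    exact abs_deriv_PFc_le ((contDiff_PFc_iterate hf i).differentiable one_ne_zero) ih x

theorem abs_PFc_iterate_le {M : ℝ} (hb : b ≠ 0) (hf_per : Periodic f 1)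
    (hf_C1 : ContDiff ℝ 1 f) (hf_mean : ∫ x in (0 : ℝ)..1, f x = 0)
    (hM : ∀ x, |deriv f x| ≤ M) (i : ℕ) (x : ℝ) : |(PFc b)^[i] f x| ≤ M / b ^ i :=
  (periodic_PFc_iterate hf_per i).abs_le_of_intervalIntegral_eq_zero
    ((contDiff_PFc_iterate hf_C1 i).differentiable one_ne_zero)
    (abs_deriv_PFc_iterate_le hf_C1 hM i)
    ((intervalIntegral_PFc_iterate hb hf_C1.continuous i).trans hf_mean) x

end Iterate

theorem Cnorm_nonneg (g : ℝ → ℝ) : 0 ≤ Cnorm g :=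
  add_nonneg (Real.iSup_nonneg fun _ => abs_nonneg _) (Real.iSup_nonneg fun _ => abs_nonneg _)

theorem Cnorm_le {g : ℝ → ℝ} {A B : ℝ} (hA : ∀ x, |g x| ≤ A)
    (hB : ∀ x, |deriv g x| ≤ B) : Cnorm g ≤ A + B :=
  add_le_add (ciSup_le hA) (ciSup_le hB)

section Series

variable {F : ℕ → ℝ → ℝ} {u : ℕ → ℝ}

theorem Cnorm_tsum_sub_sum_le (hu : Summable u) (hF : ∀ i, Differentiable ℝ (F i))
    (hFu : ∀ i x, |F i x| ≤ u i) (hF'u : ∀ i x, |deriv (F i) x| ≤ u i) (m : ℕ) :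
    Cnorm (fun x => ∑' i, F i x - ∑ i ∈ range m, F i x) ≤ 2 * ∑' i, u (i + m) := by
  have hum : Summable fun i => u (i + m) := (summable_nat_add_iff m).mpr hu
  have hFsum (x : ℝ) : Summable fun i => F i x := hu.of_norm_bounded (hFu · x)
  have htail :
      (fun x => ∑' i, F i x - ∑ i ∈ range m, F i x) = fun x => ∑' i, F (i + m) x := by
    funext x
    rw [← (hFsum x).sum_add_tsum_nat_add m, add_sub_cancel_left]
  rw [htail, two_mul]
  refine Cnorm_le (fun x => tsum_of_norm_bounded (f := fun i => F (i + m) x) hum.hasSum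
    fun i => hFu _ x) fun x => ?_
  rw [deriv_tsum hum (fun i => hF (i + m)) (fun i => hF'u (i + m))
    ((summable_nat_add_iff m).mpr (hFsum 0))]
  exact tsum_of_norm_bounded (f := fun i => deriv (F (i + m)) x) hum.hasSum fun i => hF'u _ x

theorem tendsto_Cnorm_tsum_sub_sum (hu : Summable u) (hF : ∀ i, Differentiable ℝ (F i))
    (hFu : ∀ i x, |F i x| ≤ u i) (hF'u : ∀ i x, |deriv (F i) x| ≤ u i) :
    Tendsto (fun m => Cnorm fun x => ∑' i, F i x - ∑ i ∈ range m, F i x) atTop (𝓝 0) := by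
  refine squeeze_zero (fun _ => Cnorm_nonneg _) (Cnorm_tsum_sub_sum_le hu hF hFu hF'u) ?_
  simpa using (tendsto_sum_nat_add u).const_mul 2

theorem contDiff_one_tsum (hu : Summable u) (hF : ∀ i, ContDiff ℝ 1 (F i))
    (hFu : ∀ i x, |F i x| ≤ u i) (hF'u : ∀ i x, |deriv (F i) x| ≤ u i) :
    ContDiff ℝ 1 fun x => ∑' i, F i x := by
  have hFd (i : ℕ) : Differentiable ℝ (F i) := (hF i).differentiable one_ne_zero
  have hFsum0 : Summable fun i => F i 0 := hu.of_norm_bounded (hFu · 0)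
  rw [contDiff_one_iff_deriv, deriv_tsum hu hFd hF'u hFsum0]
  exact ⟨differentiable_tsum' hu (fun i y => (hFd i y).hasDerivAt) hF'u,
    continuous_tsum (fun i => (contDiff_one_iff_deriv.mp (hF i)).2) hu hF'u⟩

end Series

theorem PFgeom_sub_PFc_PFgeom {b : ℕ} {f : ℝ → ℝ}
    (hf : ∀ x, Summable fun i => (PFc b)^[i] f x) (x : ℝ) :
    PFgeom b f x - PFc b (PFgeom b f) x = f x := by
  unfold PFgeom
  rw [PFc_tsum hf, (hf x).tsum_eq_zero_add]
  simp only [iterate_succ_apply', iterate_zero_apply]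
  ring

theorem Function.Periodic.ae_eq_of_ae_eq_restrict_Ioc {g h : ℝ → ℝ} (hg : Periodic g 1)
    (hh : Periodic h 1) (hgh : g =ᵐ[volume.restrict (Set.Ioc 0 1)] h) : g =ᵐ[volume] h := by
  have hfd := isAddFundamentalDomain_Ioc one_pos 0 (volume : Measure ℝ)
  rw [zero_add] at hfd
  rw [EventuallyEq, ae_iff, Measure.restrict_apply' measurableSet_Ioc] at hgh
  rw [EventuallyEq, ae_iff]
  refine hfd.measure_zero_of_invariant _ (fun γ => ?_) hgh
  obtain ⟨γ, n, rfl⟩ := γ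
  have hshift (k : ℝ → ℝ) (hk : Periodic k 1) (x : ℝ) : k (-n + x) = k x := by
    simpa [neg_add_eq_sub] using hk.sub_int_mul_eq n
  ext x
  simp [Set.mem_vadd_set_iff_neg_vadd_mem, AddSubgroup.vadd_def, hshift g hg, hshift h hh]

section Coboundary

variable {b : ℕ}

theorem apply_add_natCast_div_eq_of_measurable_circleSigma (hb : b ≠ 0) {h : ℝ → ℝ}
    (hh : Measurable[circleSigma b] h) (x : ℝ) (n : ℕ) : h (x + n / b) = h x :=
  hh.factorsThrough <| by
    show Int.fract (b * (x + n / b)) = Int.fract (b * x)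
    rw [mul_add, mul_div_cancel₀ _ (Nat.cast_ne_zero.mpr hb), Int.fract_add_natCast]

theorem ae_apply_add_div_eq_of_ae_eq_measurable_circleSigma (hb : b ≠ 0) {g h : ℝ → ℝ}
    (hg : Periodic g 1) (hh : Measurable[circleSigma b] h) (hgh : g =ᵐ[circleMeasure] h) :
    ∀ᵐ x, ∀ j < b, g (x + j / b) = g x := by
  have hh_add := apply_add_natCast_div_eq_of_measurable_circleSigma hb hh
  have hh_per : Periodic h 1 := fun x => by
    simpa [div_self (Nat.cast_ne_zero.mpr hb : (b : ℝ) ≠ 0)] using hh_add x b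
  have hae : g =ᵐ[volume] h := hg.ae_eq_of_ae_eq_restrict_Ioc hh_per hgh
  have hshift (c : ℝ) : ∀ᵐ x, g (x + c) = h (x + c) :=
    (measurePreserving_add_right volume c).quasiMeasurePreserving.ae_eq hae
  filter_upwards [hae, (eventually_all_finset (range b)).mpr fun j _ => hshift (j / b)]
    with x hx hxj j hj
  rw [hxj j (mem_range.mpr hj), hh_add, hx]

end Coboundary

/-- The series `g = ∑_{i=0}^∞ (T̂*_b)^i f` converges in `C¹`-norm and satisfies
`g − T̂*_b g = f`.  Moreover, if `g` is (a.e. equal to a function) measurable with respect to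
`T_b^{-1}(Borel)`, then `u := T̂*_b g` is `C¹` and satisfies `u ∘ T_b − u = f` a.e.; in
particular `f` is then a `T_b`-coboundary with continuously differentiable transfer function. -/
theorem geometric_series_and_coboundary
    (b : ℕ) (hb : 2 ≤ b)
    (f : ℝ → ℝ) (hf_per : Periodic f 1) (hf_C1 : ContDiff ℝ 1 f)
    (hf_mean : ∫ x in Set.Ioc (0 : ℝ) 1, f x = 0) :
    Tendsto (fun m => Cnorm (fun x =>
        PFgeom b f x - ∑ i ∈ Finset.range m, (PFc b)^[i] f x)) atTop (𝓝 0) ∧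
    (∀ x, PFgeom b f x - PFc b (PFgeom b f) x = f x) ∧
    ((∃ h : ℝ → ℝ, Measurable[circleSigma b] h ∧ PFgeom b f =ᵐ[circleMeasure] h) →
      ContDiff ℝ 1 (PFc b (PFgeom b f)) ∧ Periodic (PFc b (PFgeom b f)) 1 ∧
      ∀ᵐ x ∂circleMeasure,
        PFc b (PFgeom b f) ((b : ℝ) * x) - PFc b (PFgeom b f) x = f x) := by
  have hb0 : b ≠ 0 := by omega
  obtain ⟨M, hM⟩ : ∃ M, ∀ x, |deriv f x| ≤ M := by
    obtain ⟨M, hM⟩ := isBounded_iff_forall_norm_le.mp <|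
      hf_per.deriv.isBounded_of_continuous one_ne_zero (contDiff_one_iff_deriv.mp hf_C1).2
    exact ⟨M, fun x => hM _ (Set.mem_range_self x)⟩
  have hu : Summable fun i : ℕ => M / (b : ℝ) ^ i := by
    have hb1 : (1 : ℝ) < b := by exact_mod_cast hb
    simpa [div_eq_mul_inv] using
      (summable_geometric_of_lt_one (by positivity) (inv_lt_one_of_one_lt₀ hb1)).mul_left M
  have hF := contDiff_PFc_iterate (b := b) hf_C1
  have hFu := abs_PFc_iterate_le hb0 hf_per hf_C1
    (by rwa [intervalIntegral.integral_of_le zero_le_one]) hM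
  have hF'u := abs_deriv_PFc_iterate_le (b := b) hf_C1 hM
  have hcob := PFgeom_sub_PFc_PFgeom fun x => hu.of_norm_bounded (hFu · x)
  refine ⟨tendsto_Cnorm_tsum_sub_sum hu (fun i => (hF i).differentiable one_ne_zero) hFu hF'u,
    hcob, ?_⟩
  rintro ⟨h, hh, hgh⟩
  have hg_per : Periodic (PFgeom b f) 1 := fun x =>
    tsum_congr fun i => periodic_PFc_iterate hf_per i x
  refine ⟨contDiff_PFc (contDiff_one_tsum hu hF hFu hF'u), periodic_PFc hg_per,
    ae_restrict_of_ae ?_⟩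
  filter_upwards [ae_apply_add_div_eq_of_ae_eq_measurable_circleSigma hb0 hg_per hh hgh]
    with x hx
  rw [PFc_apply_mul_self hb0 hx]
  linarith [hcob x]
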